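/- arXiv:2001.02927 — 2 statements merged into one kernel-verified Lean document; each statement's English description precedes it below -/
import Mathlib

section
/- In any group, if elements x and y satisfy xyx = yxy, then the element (xy)³ is central in the subgroup generated by x and y. -/
/-- If xyx = yxy in a group, then (xy)³ is central in the subgroup generated by
x and y. -/
theorem braid_cube_central {G : Type*} [Group G] (x y : G)
    (hbraid : x * y * x = y * x * y) :
    ∀ g ∈ Subgroup.closure ({x, y} : Set G), Commute ((x * y) ^ 3) g := by
  have hx : Commute ((x * y) ^ 3) x := by
    show (x*y)^3 * x = x * (x*y)^3
    calc (x*y)^3 * x = x*y*x*y*(x*y*x) := by simp [pow_succ, mul_assoc]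
    _ = x*y*x*y*(y*x*y) := by rw [hbraid]
    _ = x*(y*x*y)*(y*x*y) := by simp [pow_succ, mul_assoc]
    _ = x*(x*y*x)*(y*x*y) := by rw [hbraid]
    _ = x*(x*y)^3 := by simp [pow_succ, mul_assoc]
  have hy : Commute ((x * y) ^ 3) y := by
    show (x*y)^3 * y = y * (x*y)^3
    calc (x*y)^3 * y = (x*y*x)*(y*x*y)*y := by simp [pow_succ, mul_assoc]
    _ = (y*x*y)*(x*y*x)*y := by rw [hbraid]
    _ = y*(x*y)^3 := by simp [pow_succ, mul_assoc]
  intro g hg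
  induction hg using Subgroup.closure_induction with
  | mem z hz =>
    rcases hz with rfl | rfl
    · exact hx
    · exact hy
  | one => exact Commute.one_right _
  | mul a b _ _ ha hb => exact ha.mul_right hb
  | inv a _ ha => exact ha.inv_right
end

section
/- The dihedral group of order 6 is a quotient of the group with presentation ⟨a, b ∣ a³ = b²⟩ (the trefoil knot group); in particular the trefoil knot group is nonabelian, hence not isomorphic to ℤ (the unknot group). -/
/-! A 3-cycle and a transposition in `S₃` satisfy `σ³ = 1 = τ²`, so sending `a ↦ σ`, `b ↦ τ`
defines a homomorphism from the trefoil group onto `S₃ = ⟨σ, τ⟩`. Since `σ` and `τ` do not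
commute, neither do `a` and `b`, and a nonabelian group is not isomorphic to `ℤ`. -/

open Equiv Equiv.Perm

theorem PresentedGroup.toGroup_surjective {α G : Type*} [Group G] {f : α → G}
    {rels : Set (FreeGroup α)} (h : ∀ r ∈ rels, FreeGroup.lift f r = 1)
    (hf : Subgroup.closure (Set.range f) = ⊤) : Function.Surjective (toGroup h) := by
  rw [← MonoidHom.range_eq_top, MonoidHom.range_eq_map, ← closure_range_of,
    MonoidHom.map_closure, ← Set.range_comp, ← hf]
  congr 2
  funext x
  exact toGroup.of h

theorem exists_mul_ne_mul_comm_of_surjective {F G H : Type*} [Mul G] [Mul H] [FunLike F G H]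
    [MulHomClass F G H] {f : F} (hf : Function.Surjective f) {a b : H} (hab : a * b ≠ b * a) :
    ∃ g h : G, g * h ≠ h * g := by
  obtain ⟨g, rfl⟩ := hf a
  obtain ⟨h, rfl⟩ := hf b
  exact ⟨g, h, fun hgh => hab (by rw [← map_mul, hgh, map_mul])⟩

theorem MulEquiv.isEmpty_of_mul_ne_mul_comm {G H : Type*} [Mul G] [CommMagma H] {g h : G}
    (hgh : g * h ≠ h * g) : IsEmpty (G ≃* H) :=
  ⟨fun e => hgh (e.injective (by rw [map_mul, map_mul, mul_comm]))⟩

namespace Trefoil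

abbrev rels : Set (FreeGroup Bool) :=
  {FreeGroup.of true ^ 3 * (FreeGroup.of false ^ 2)⁻¹}

abbrev rotation : Perm (Fin 3) := finRotate 3

abbrev transposition : Perm (Fin 3) := swap 0 1

def toPermGen (b : Bool) : Perm (Fin 3) := if b then rotation else transposition

theorem lift_toPermGen_rels : ∀ r ∈ rels, FreeGroup.lift toPermGen r = 1 := by
  rintro r rfl
  simp only [map_mul, map_pow, map_inv, FreeGroup.lift_apply_of, toPermGen]
  decide

theorem closure_range_toPermGen : Subgroup.closure (Set.range toPermGen) = ⊤ := by
  refine eq_top_mono (Subgroup.closure_mono ?_)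
    (closure_cycle_adjacent_swap isCycle_finRotate support_finRotate (0 : Fin 3))
  exact Set.insert_subset ⟨true, rfl⟩ (Set.singleton_subset_iff.mpr ⟨false, rfl⟩)

theorem rotation_mul_transposition_ne : rotation * transposition ≠ transposition * rotation := by
  decide

end Trefoil

/-- The dihedral group of order 6 (≅ S₃) is a quotient of the trefoil knot group
⟨a, b ∣ a³ = b²⟩; in particular the trefoil knot group is nonabelian, hence not
isomorphic to ℤ (the unknot group). -/
theorem trefoil_group_not_Z :
    (∃ f : PresentedGroup
        ({FreeGroup.of true ^ 3 * (FreeGroup.of false ^ 2)⁻¹} : Set (FreeGroup Bool)) →*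
        Equiv.Perm (Fin 3), Function.Surjective f) ∧
    (∃ g h : PresentedGroup
        ({FreeGroup.of true ^ 3 * (FreeGroup.of false ^ 2)⁻¹} : Set (FreeGroup Bool)),
        g * h ≠ h * g) ∧
    IsEmpty (PresentedGroup
        ({FreeGroup.of true ^ 3 * (FreeGroup.of false ^ 2)⁻¹} : Set (FreeGroup Bool)) ≃*
      Multiplicative ℤ) := by
  have hsurj := PresentedGroup.toGroup_surjective Trefoil.lift_toPermGen_rels
    Trefoil.closure_range_toPermGen
  obtain ⟨g, h, hgh⟩ :=
    exists_mul_ne_mul_comm_of_surjective hsurj Trefoil.rotation_mul_transposition_ne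
  exact ⟨⟨_, hsurj⟩, ⟨g, h, hgh⟩, MulEquiv.isEmpty_of_mul_ne_mul_comm hgh⟩
end
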